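/- arXiv:1010.5466 — 2 statements merged into one kernel-verified Lean document; each statement's English description precedes it below -/
import Mathlib

section
/- Let p be an odd prime and G a finite group with g^p = 1 for all g ∈ G and [G,G] = Z(G), 1 < Z(G) < G, and set b = Bi(G). The map sending an automorphism φ of G to the pair consisting of the induced map on G/Z(G) and the induced map on [G,G] is a group homomorphism from Aut(G) onto the pseudo-isometry group ΨIsom(b) = {(f, f̂) ∈ GL(G/Z(G)) × GL([G,G]) : b(uf, vf) = b(u,v)f̂ for all u,v}; this homomorphism is surjective, its kernel consists exactly of the automorphisms inducing the identity on both G/Z(G) and [G,G], the kernel is isomorphic to the additive group Hom_{𝔽_p}(G/Z(G), [G,G]), and the resulting extension splits (so Aut(G) ≅ ΨIsom(b) ⋉ Hom_{𝔽_p}(G/Z(G), [G,G])). -/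
open scoped commutatorElement IsMulCommutative

/-!
An automorphism of `G` preserves `Z(G)` and commutators, so it induces a pseudo-isometry
`(f, f̂)` of `Bi(G)`. The automorphisms inducing the identity on both sides are exactly the
central automorphisms `g ↦ g τ(gZ)` with `τ ∈ Hom(G/Z, Z)`.

For the converse and the splitting we use Baer's trick: `a + b = a b ⁅b, a⁆ ^ (1/2)` makes
`G` an `𝔽_p`-vector space on which `G → G/Z` is linear, so it has a linear section `s`, i.e.
`s (u v) = s u * s v * ⁅s v, s u⁆ ^ (1/2)`. Writing every element as `s u * z` with `z` central,
a pseudo-isometry `(f, f̂)` lifts to the automorphism `s u * z ↦ s (f u) * f̂ z`: the correction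
term `⁅s v, s u⁆ = Bi(v, u)` is carried by `f̂` to `Bi(f v, f u)`. The lift is multiplicative in
`(f, f̂)`, which splits the extension.
-/

open Subgroup (center mem_center_iff)

namespace MulAut

variable {G : Type*} [Group G] (H : Subgroup G) [H.Characteristic]

def quotient : MulAut G →* MulAut (G ⧸ H) where
  toFun φ := QuotientGroup.congr H H φ (Subgroup.characteristic_iff_map_eq.mp ‹_› φ)
  map_one' := by ext x; induction x using QuotientGroup.induction_on; rfl
  map_mul' _ _ := by ext x; induction x using QuotientGroup.induction_on; rfl

@[simp]
theorem quotient_apply_mk (φ : MulAut G) (g : G) : quotient H φ g = (φ g : G ⧸ H) := rfl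

end MulAut

section InducedPair

variable {G : Type*} [Group G]

def autInducedPair : MulAut G →* MulAut (G ⧸ center G) × MulAut (center G) :=
  (MulAut.quotient (center G)).prod (MulAut.characteristic (center G))

@[simp]
theorem autInducedPair_fst_apply_mk (φ : MulAut G) (g : G) :
    (autInducedPair φ).1 g = (φ g : G ⧸ center G) :=
  MulAut.quotient_apply_mk _ φ g

@[simp]
theorem coe_autInducedPair_snd_apply (φ : MulAut G) (c : center G) :
    ((autInducedPair φ).2 c : G) = φ c := rfl

theorem mem_ker_autInducedPair_iff (φ : MulAut G) :
    φ ∈ (autInducedPair (G := G)).ker ↔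
      (∀ g : G, (φ g : G ⧸ center G) = g) ∧ ∀ c ∈ center G, φ c = c := by
  simp only [MonoidHom.mem_ker, Prod.ext_iff, MulEquiv.ext_iff, QuotientGroup.forall_mk,
    Subtype.ext_iff, Subtype.forall]
  rfl

section CentralAut

variable (τ : G ⧸ center G →* center G)

def centralAut : MulAut G where
  toFun g := g * τ g
  invFun g := g * (τ g)⁻¹
  left_inv g := by simp
  right_inv g := by simp [QuotientGroup.mk_mul_of_mem g (inv_mem (τ g).2)]
  map_mul' g h := by
    change g * h * (τ (g * h) : G) = g * τ g * (h * τ h)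
    rw [map_mul, Subgroup.coe_mul, mul_assoc g h, ← mul_assoc h,
      mem_center_iff.mp (τ g).2 h]
    group

theorem centralAut_apply (g : G) : centralAut τ g = g * τ g := rfl

theorem centralAut_mem_ker : centralAut τ ∈ (autInducedPair (G := G)).ker := by
  refine (mem_ker_autInducedPair_iff _).mpr
    ⟨fun g => QuotientGroup.mk_mul_of_mem g (τ g).2, fun c hc => ?_⟩
  rw [centralAut_apply, (QuotientGroup.eq_one_iff c).mpr hc, map_one, Subgroup.coe_one, mul_one]

end CentralAut

theorem inv_mul_apply_mem_center_of_mem_ker {φ : MulAut G}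
    (hφ : φ ∈ (autInducedPair (G := G)).ker) (g : G) : g⁻¹ * φ g ∈ center G :=
  QuotientGroup.eq.mp (((mem_ker_autInducedPair_iff φ).mp hφ).1 g).symm

theorem apply_eq_of_mem_ker_of_mem_center {φ : MulAut G}
    (hφ : φ ∈ (autInducedPair (G := G)).ker) {c : G} (hc : c ∈ center G) : φ c = c :=
  ((mem_ker_autInducedPair_iff φ).mp hφ).2 c hc

def kerDisplacement (φ : (autInducedPair (G := G)).ker) : G ⧸ center G →* center G :=
  QuotientGroup.lift (center G)
    { toFun g := ⟨g⁻¹ * φ.1 g, inv_mul_apply_mem_center_of_mem_ker φ.2 g⟩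
      map_one' := by simp
      map_mul' g h := by
        ext
        have hc := mem_center_iff.mp (inv_mul_apply_mem_center_of_mem_ker φ.2 g) h⁻¹
        simp only [mul_inv_rev, map_mul, Subgroup.coe_mul]
        rw [mul_assoc, ← mul_assoc g⁻¹, ← mul_assoc h⁻¹, hc]
        group }
    (fun c hc => by
      ext
      simp [apply_eq_of_mem_ker_of_mem_center φ.2 hc])

theorem coe_kerDisplacement_mk (φ : (autInducedPair (G := G)).ker) (g : G) :
    (kerDisplacement φ g : G) = g⁻¹ * φ.1 g := rfl

def kerAutInducedPairEquiv : (autInducedPair (G := G)).ker ≃* (G ⧸ center G →* center G) where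
  toFun := kerDisplacement
  invFun τ := ⟨centralAut τ, centralAut_mem_ker τ⟩
  left_inv φ := by
    ext g
    simp [centralAut_apply, coe_kerDisplacement_mk]
  right_inv τ := by
    ext g
    simp [coe_kerDisplacement_mk, centralAut_apply]
  map_mul' φ ψ := by
    ext g
    have hψ : ψ.1 g = g * (g⁻¹ * ψ.1 g) := by group
    simp only [MonoidHom.comp_apply, QuotientGroup.mk'_apply, MonoidHom.mul_apply,
      Subgroup.coe_mul, coe_kerDisplacement_mk, MulAut.mul_apply]
    rw [hψ, map_mul, apply_eq_of_mem_ker_of_mem_center φ.2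
      (inv_mul_apply_mem_center_of_mem_ker ψ.2 g)]
    group

end InducedPair

section ClassTwo

variable {G : Type*} [Group G]

theorem commutatorElement_mul_center_left (a b : G) {z : G} (hz : z ∈ center G) :
    ⁅a * z, b⁆ = ⁅a, b⁆ := by
  rw [commutatorElement_def, commutatorElement_def, mul_inv_rev, mul_assoc a z b,
    ← mem_center_iff.mp hz b]
  group

theorem commutatorElement_mul_center_right (a b : G) {z : G} (hz : z ∈ center G) :
    ⁅a, b * z⁆ = ⁅a, b⁆ := by
  rw [← commutatorElement_inv, commutatorElement_mul_center_left b a hz, commutatorElement_inv]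

theorem commutatorElement_mem_center (hG : commutator G ≤ center G) (a b : G) :
    ⁅a, b⁆ ∈ center G :=
  hG (Subgroup.commutator_mem_commutator (Subgroup.mem_top a) (Subgroup.mem_top b))

theorem commute_commutatorElement (hG : commutator G ≤ center G) (g a b : G) :
    Commute g ⁅a, b⁆ :=
  mem_center_iff.mp (commutatorElement_mem_center hG a b) g

theorem commutatorElement_mul_left (hG : commutator G ≤ center G) (a b c : G) :
    ⁅a * b, c⁆ = ⁅a, c⁆ * ⁅b, c⁆ := by
  have h : ⁅a * b, c⁆ = a * ⁅b, c⁆ * a⁻¹ * ⁅a, c⁆ := by group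
  rw [h, mem_center_iff.mp (commutatorElement_mem_center hG b c) a, mul_inv_cancel_right]
  exact mem_center_iff.mp (commutatorElement_mem_center hG a c) _

theorem commutatorElement_mul_right (hG : commutator G ≤ center G) (a b c : G) :
    ⁅a, b * c⁆ = ⁅a, b⁆ * ⁅a, c⁆ := by
  rw [← commutatorElement_inv, commutatorElement_mul_left hG, mul_inv_rev,
    commutatorElement_inv, commutatorElement_inv, mem_center_iff.mp
    (commutatorElement_mem_center hG a b)]

theorem commutatorElement_pow_left (hG : commutator G ≤ center G) (a b : G) (n : ℕ) :
    ⁅a ^ n, b⁆ = ⁅a, b⁆ ^ n := by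
  induction n with
  | zero => simp
  | succ n ih => rw [pow_succ, commutatorElement_mul_left hG, ih, pow_succ]

theorem mul_eq_mul_mul_commutatorElement (hG : commutator G ≤ center G) (a b : G) :
    a * b = b * a * ⁅a, b⁆ := by
  rw [mem_center_iff.mp (commutatorElement_mem_center hG a b) (b * a)]
  group

end ClassTwo

section PseudoIsometry

variable {G : Type*} [Group G]

/-- The commutator bimap `Bi(G)`. -/
def commBimap (hG : commutator G ≤ center G) (u v : G ⧸ center G) : center G :=
  Quotient.lift₂ (fun g h : G => (⟨⁅g, h⁆, commutatorElement_mem_center hG g h⟩ : center G))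
    (fun a b a' b' ha hb => by
      obtain ⟨z, hz, rfl⟩ : ∃ z ∈ center G, a' = a * z :=
        ⟨a⁻¹ * a', QuotientGroup.leftRel_apply.mp ha, by group⟩
      obtain ⟨w, hw, rfl⟩ : ∃ w ∈ center G, b' = b * w :=
        ⟨b⁻¹ * b', QuotientGroup.leftRel_apply.mp hb, by group⟩
      ext
      change ⁅a, b⁆ = ⁅a * z, b * w⁆
      rw [commutatorElement_mul_center_left _ _ hz,
        commutatorElement_mul_center_right _ _ hw]) u v

theorem coe_commBimap_mk (hG : commutator G ≤ center G) (g h : G) :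
    (commBimap hG g h : G) = ⁅g, h⁆ := rfl

/-- The pseudo-isometry group `ΨIsom(Bi(G))`. -/
def pseudoIsometries (hG : commutator G ≤ center G) :
    Subgroup (MulAut (G ⧸ center G) × MulAut (center G)) where
  carrier := {x | ∀ u v, x.2 (commBimap hG u v) = commBimap hG (x.1 u) (x.1 v)}
  one_mem' _ _ := rfl
  mul_mem' {x y} hx hy u v := by
    simp only [Prod.fst_mul, Prod.snd_mul, MulAut.mul_apply]
    rw [hy, hx]
  inv_mem' {x} hx u v := by
    apply x.2.injective
    simp only [Prod.fst_inv, Prod.snd_inv]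
    rw [MulAut.apply_inv_self, hx, MulAut.apply_inv_self, MulAut.apply_inv_self]

theorem mem_pseudoIsometries_iff_forall_lift (hG : commutator G ≤ center G)
    (x : MulAut (G ⧸ center G) × MulAut (center G)) :
    x ∈ pseudoIsometries hG ↔ ∀ g h g' h' : G, x.1 g = g' → x.1 h = h' →
      x.2 ⟨⁅g, h⁆, commutatorElement_mem_center hG g h⟩ =
        ⟨⁅g', h'⁆, commutatorElement_mem_center hG g' h'⟩ := by
  refine ⟨fun hx g h g' h' hg hh => ?_, fun hx u v => ?_⟩
  · have := hx g h
    rwa [hg, hh] at this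
  · induction u using QuotientGroup.induction_on with | H g =>
    induction v using QuotientGroup.induction_on with | H h =>
    obtain ⟨g', hg'⟩ := QuotientGroup.mk_surjective (x.1 g)
    obtain ⟨h', hh'⟩ := QuotientGroup.mk_surjective (x.1 h)
    rw [← hg', ← hh']
    exact hx g h g' h' hg'.symm hh'.symm

theorem autInducedPair_mem_pseudoIsometries (hG : commutator G ≤ center G) (φ : MulAut G) :
    autInducedPair φ ∈ pseudoIsometries hG := by
  intro u v
  induction u using QuotientGroup.induction_on with | H g =>
  induction v using QuotientGroup.induction_on with | H h =>
  ext
  simp [coe_commBimap_mk]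

end PseudoIsometry

section Baer

variable {G : Type*} [Group G]

theorem commutatorElement_pow_eq_one (hG : commutator G ≤ center G) {p : ℕ}
    (hexp : ∀ g : G, g ^ p = 1) (a b : G) : ⁅a, b⁆ ^ p = 1 := by
  rw [← commutatorElement_pow_left hG, hexp, commutatorElement_one_left]

/-- Baer's trick: `(p + 1) / 2` is `1 / 2` modulo the exponent, so `a + b` halves the commutator
between `a b` and `b a` and is commutative; associativity comes from bilinearity of `⁅·, ·⁆`. -/
abbrev baerAddCommGroup (hG : commutator G ≤ center G) {p : ℕ} (hp : Odd p)
    (hexp : ∀ g : G, g ^ p = 1) : AddCommGroup G where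
  add a b := a * b * ⁅b, a⁆ ^ ((p + 1) / 2)
  zero := 1
  neg a := a⁻¹
  nsmul n a := a ^ n
  zsmul n a := a ^ n
  add_assoc a b c := by
    set k := (p + 1) / 2
    have central (x y g : G) : Commute g (⁅x, y⁆ ^ k) :=
      (commute_commutatorElement hG g x y).pow_right k
    change a * b * ⁅b, a⁆ ^ k * c * ⁅c, a * b * ⁅b, a⁆ ^ k⁆ ^ k =
      a * (b * c * ⁅c, b⁆ ^ k) * ⁅b * c * ⁅c, b⁆ ^ k, a⁆ ^ k
    rw [commutatorElement_mul_center_right _ _ (pow_mem (commutatorElement_mem_center hG b a) k),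
      commutatorElement_mul_center_left _ _ (pow_mem (commutatorElement_mem_center hG c b) k),
      commutatorElement_mul_right hG, commutatorElement_mul_left hG,
      (commute_commutatorElement hG _ c b).mul_pow,
      (commute_commutatorElement hG _ c a).mul_pow,
      mul_assoc (a * b) _ c, ← (central b a c).eq]
    simp only [mul_assoc]
    rw [← (central c b _).eq, mul_assoc]
  zero_add a := by
    change 1 * a * ⁅a, 1⁆ ^ ((p + 1) / 2) = a
    simp
  add_zero a := by
    change a * 1 * ⁅1, a⁆ ^ ((p + 1) / 2) = a
    simp
  nsmul_zero := pow_zero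
  nsmul_succ n a := by
    change a ^ (n + 1) = a ^ n * a * ⁅a, a ^ n⁆ ^ ((p + 1) / 2)
    rw [commutatorElement_eq_one_iff_commute.mpr ((Commute.refl a).pow_right n), one_pow, mul_one,
      pow_succ]
  zsmul_zero' := zpow_zero
  zsmul_succ' n a := by
    change a ^ ((n + 1 : ℕ) : ℤ) = a ^ (n : ℤ) * a * ⁅a, a ^ (n : ℤ)⁆ ^ ((p + 1) / 2)
    rw [zpow_natCast, zpow_natCast, commutatorElement_eq_one_iff_commute.mpr
      ((Commute.refl a).pow_right n), one_pow, mul_one, pow_succ]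
  zsmul_neg' n a := by
    change a ^ (Int.negSucc n) = (a ^ ((n + 1 : ℕ) : ℤ))⁻¹
    rw [zpow_negSucc, zpow_natCast]
  neg_add_cancel a := by
    change a⁻¹ * a * ⁅a, a⁻¹⁆ ^ ((p + 1) / 2) = 1
    simp [commutatorElement_eq_one_iff_commute.mpr (Commute.refl a).inv_right]
  add_comm a b := by
    change a * b * ⁅b, a⁆ ^ ((p + 1) / 2) = b * a * ⁅a, b⁆ ^ ((p + 1) / 2)
    have hk : (p + 1) / 2 + (p + 1) / 2 = p + 1 := by obtain ⟨m, rfl⟩ := hp; omega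
    rw [mul_eq_mul_mul_commutatorElement hG a b, mul_assoc,
      ← commutatorElement_inv (g₁ := a) (g₂ := b), inv_pow, mul_right_inj,
      mul_inv_eq_iff_eq_mul, ← pow_add, hk, pow_succ, commutatorElement_pow_eq_one hG hexp,
      one_mul]

end Baer

theorem AddMonoidHom.exists_rightInverse_of_surjective_of_zmod {p : ℕ} [Fact p.Prime]
    {V W : Type*} [AddCommGroup V] [AddCommGroup W] [Module (ZMod p) V] [Module (ZMod p) W]
    (f : V →+ W) (hf : Function.Surjective f) : ∃ g : W →+ V, ∀ w, f (g w) = w := by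
  obtain ⟨g, hg⟩ := (f.toZModLinearMap p).exists_rightInverse_of_surjective
    (LinearMap.range_eq_top.mpr hf)
  exact ⟨g.toAddMonoidHom, fun w => congr($hg w)⟩

theorem exists_baer_section {G : Type*} [Group G] (hG : commutator G ≤ center G) {p : ℕ}
    [Fact p.Prime] (hp : Odd p) (hexp : ∀ g : G, g ^ p = 1) :
    ∃ s : G ⧸ center G → G, (∀ u, (s u : G ⧸ center G) = u) ∧
      ∀ u v, s (u * v) = s u * s v * ⁅s v, s u⁆ ^ ((p + 1) / 2) := by
  let _ := baerAddCommGroup hG hp hexp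
  let _ : Module (ZMod p) G := AddCommGroup.zmodModule hexp
  have : IsMulCommutative (G ⧸ center G) :=
    Subgroup.Normal.quotient_commutative_iff_commutator_le.mpr hG
  let _ : Module (ZMod p) (Additive (G ⧸ center G)) := AddCommGroup.zmodModule fun u => by
    induction u using Additive.rec with | ofMul u =>
    induction u using QuotientGroup.induction_on with | H g =>
    rw [← ofMul_pow, ← QuotientGroup.mk_pow, hexp, QuotientGroup.mk_one, ofMul_one]
  let mk : G →+ Additive (G ⧸ center G) :=
    { toFun g := Additive.ofMul (g : G ⧸ center G)
      map_zero' := rfl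
      map_add' a b := QuotientGroup.mk_mul_of_mem (a * b)
        (pow_mem (commutatorElement_mem_center hG b a) _) }
  obtain ⟨σ, hσ⟩ := mk.exists_rightInverse_of_surjective_of_zmod (p := p)
    fun u => QuotientGroup.mk_surjective u.toMul
  exact ⟨fun u => σ (Additive.ofMul u), fun u => hσ (Additive.ofMul u),
    fun u v => map_add σ (Additive.ofMul u) (Additive.ofMul v)⟩

section SectionLift

variable {G : Type*} [Group G] {s : G ⧸ center G → G} {k : ℕ}

theorem exists_section_mul_eq (hs : ∀ u, (s u : G ⧸ center G) = u) (g : G) :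
    ∃ u, ∃ z : center G, s u * z = g :=
  ⟨g, ⟨(s g)⁻¹ * g, QuotientGroup.eq.mp (hs g)⟩, mul_inv_cancel_left _ _⟩

theorem mk_section_mul (hs : ∀ u, (s u : G ⧸ center G) = u) (u : G ⧸ center G)
    (z : center G) :
    ((s u * z : G) : G ⧸ center G) = u := by
  rw [QuotientGroup.mk_mul_of_mem _ z.2, hs]

def sectionLift (hs : ∀ u, (s u : G ⧸ center G) = u)
    (x : MulAut (G ⧸ center G) × MulAut (center G)) (g : G) : G :=
  s (x.1 g) * x.2 ⟨(s g)⁻¹ * g, QuotientGroup.eq.mp (hs g)⟩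

theorem sectionLift_section_mul (hs : ∀ u, (s u : G ⧸ center G) = u)
    (x : MulAut (G ⧸ center G) × MulAut (center G)) (u : G ⧸ center G) (z : center G) :
    sectionLift hs x (s u * z) = s (x.1 u) * x.2 z := by
  have hu := mk_section_mul hs u z
  simp only [sectionLift, hu, inv_mul_cancel_left]

theorem mk_sectionLift (hs : ∀ u, (s u : G ⧸ center G) = u)
    (x : MulAut (G ⧸ center G) × MulAut (center G)) (g : G) :
    ((sectionLift hs x g : G) : G ⧸ center G) = x.1 g :=
  mk_section_mul hs _ _

theorem sectionLift_one (hs : ∀ u, (s u : G ⧸ center G) = u) (g : G) : sectionLift hs 1 g = g :=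
  mul_inv_cancel_left _ _

theorem sectionLift_sectionLift (hs : ∀ u, (s u : G ⧸ center G) = u)
    (x y : MulAut (G ⧸ center G) × MulAut (center G)) (g : G) :
    sectionLift hs x (sectionLift hs y g) = sectionLift hs (x * y) g :=
  sectionLift_section_mul hs x _ _

theorem section_apply_one (hs_mul : ∀ u v, s (u * v) = s u * s v * ⁅s v, s u⁆ ^ k) :
    s 1 = 1 := by
  have h := hs_mul 1 1
  rw [mul_one, commutatorElement_self, one_pow, mul_one] at h
  exact mul_eq_left.mp h.symm

theorem section_mul_section (hG : commutator G ≤ center G) (hs : ∀ u, (s u : G ⧸ center G) = u)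
    (hs_mul : ∀ u v, s (u * v) = s u * s v * ⁅s v, s u⁆ ^ k) (u v : G ⧸ center G)
    (z w : center G) :
    s u * z * (s v * w) = s (u * v) * ↑((commBimap hG v u)⁻¹ ^ k * z * w) := by
  have hB : (commBimap hG v u : G) = ⁅s v, s u⁆ := by
    conv_lhs => rw [← hs v, ← hs u]
    rfl
  rw [Subgroup.coe_mul, Subgroup.coe_mul, Subgroup.coe_pow, Subgroup.coe_inv, hB, hs_mul,
    inv_pow]
  simp only [mul_assoc, mul_inv_cancel_left]
  rw [← mul_assoc (z : G), ← mem_center_iff.mp z.2 (s v), mul_assoc]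

theorem sectionLift_mul (hG : commutator G ≤ center G) (hs : ∀ u, (s u : G ⧸ center G) = u)
    (hs_mul : ∀ u v, s (u * v) = s u * s v * ⁅s v, s u⁆ ^ k)
    {x : MulAut (G ⧸ center G) × MulAut (center G)} (hx : x ∈ pseudoIsometries hG) (g h : G) :
    sectionLift hs x (g * h) = sectionLift hs x g * sectionLift hs x h := by
  obtain ⟨u, z, rfl⟩ := exists_section_mul_eq hs g
  obtain ⟨v, w, rfl⟩ := exists_section_mul_eq hs h
  rw [section_mul_section hG hs hs_mul, sectionLift_section_mul, sectionLift_section_mul,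
    sectionLift_section_mul, map_mul, map_mul, map_mul, map_pow, map_inv, hx,
    section_mul_section hG hs hs_mul]

def sectionLiftHom (hG : commutator G ≤ center G) (hs : ∀ u, (s u : G ⧸ center G) = u)
    (hs_mul : ∀ u v, s (u * v) = s u * s v * ⁅s v, s u⁆ ^ k) :
    pseudoIsometries hG →* MulAut G where
  toFun x :=
    { toFun := sectionLift hs x
      invFun := sectionLift hs x⁻¹
      left_inv g := by rw [sectionLift_sectionLift, inv_mul_cancel, sectionLift_one]
      right_inv g := by rw [sectionLift_sectionLift, mul_inv_cancel, sectionLift_one]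
      map_mul' := sectionLift_mul hG hs hs_mul x.2 }
  map_one' := MulEquiv.ext (sectionLift_one hs)
  map_mul' x y := MulEquiv.ext fun g => (sectionLift_sectionLift hs x y g).symm

theorem autInducedPair_sectionLiftHom (hG : commutator G ≤ center G)
    (hs : ∀ u, (s u : G ⧸ center G) = u)
    (hs_mul : ∀ u v, s (u * v) = s u * s v * ⁅s v, s u⁆ ^ k) (x : pseudoIsometries hG) :
    autInducedPair (sectionLiftHom hG hs hs_mul x) = x := by
  refine Prod.ext (MulEquiv.ext fun u => ?_) (MulEquiv.ext fun c => Subtype.ext ?_)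
  · induction u using QuotientGroup.induction_on with | H g =>
    exact mk_sectionLift hs x g
  · have hc : s 1 * c = (c : G) := by rw [section_apply_one hs_mul, one_mul]
    change sectionLift hs x c = _
    rw [← hc, sectionLift_section_mul, map_one, section_apply_one hs_mul, one_mul]

end SectionLift

theorem exists_rightInverse_autInducedPair {G : Type*} [Group G] (hG : commutator G ≤ center G)
    {p : ℕ} [Fact p.Prime] (hp : Odd p) (hexp : ∀ g : G, g ^ p = 1) :
    ∃ σ : pseudoIsometries hG →* MulAut G, ∀ x, autInducedPair (σ x) = x := by
  obtain ⟨s, hs, hs_mul⟩ := exists_baer_section hG hp hexp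
  exact ⟨sectionLiftHom hG hs hs_mul, autInducedPair_sectionLiftHom hG hs hs_mul⟩

theorem range_autInducedPair {G : Type*} [Group G] (hG : commutator G ≤ center G)
    {p : ℕ} [Fact p.Prime] (hp : Odd p) (hexp : ∀ g : G, g ^ p = 1) :
    (autInducedPair (G := G)).range = pseudoIsometries hG := by
  obtain ⟨σ, hσ⟩ := exists_rightInverse_autInducedPair hG hp hexp
  refine le_antisymm ?_ fun x hx => ⟨σ ⟨x, hx⟩, hσ _⟩
  rintro _ ⟨φ, rfl⟩
  exact autInducedPair_mem_pseudoIsometries hG φ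

/-- Let `p` be an odd prime and `G` a finite group with `g^p = 1` for all
`g`, `[G,G] = Z(G)` and `1 < Z(G) < G`.  The map sending an automorphism of `G` to the pair
of maps it induces on `G/Z(G)` and on `Z(G) = [G,G]` is a group homomorphism `π` whose range
is exactly the group `ΨIsom(Bi(G))` of pseudo-isometries of the commutator bimap, whose kernel
consists exactly of the automorphisms inducing the identity on `G/Z(G)` and on `[G,G]`, that
kernel being isomorphic to `Hom(G/Z(G), [G,G])`; moreover the extension splits. -/
theorem aut_of_class_two_structure
    (p : ℕ) [Fact p.Prime] (hp : Odd p) (G : Type) [Group G]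
    (hexp : ∀ g : G, g ^ p = 1)
    (hcz : commutator G = Subgroup.center G) :
    ∃ π : MulAut G →* MulAut (G ⧸ Subgroup.center G) × MulAut ↥(Subgroup.center G),
      (∀ (φ : MulAut G) (g : G),
        (π φ).1 ↑g = ((φ g : G) : G ⧸ Subgroup.center G)) ∧
      (∀ (φ : MulAut G) (c : ↥(Subgroup.center G)), ((π φ).2 c : G) = φ ↑c) ∧
      (∀ x : MulAut (G ⧸ Subgroup.center G) × MulAut ↥(Subgroup.center G),
        x ∈ π.range ↔
          ∀ g h g' h' : G,
            x.1 ↑g = (↑g' : G ⧸ Subgroup.center G) →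
            x.1 ↑h = (↑h' : G ⧸ Subgroup.center G) →
            x.2 ⟨⁅g, h⁆, by
                rw [← hcz, commutator_def]
                exact Subgroup.commutator_mem_commutator (Subgroup.mem_top g)
                  (Subgroup.mem_top h)⟩ =
              ⟨⁅g', h'⁆, by
                rw [← hcz, commutator_def]
                exact Subgroup.commutator_mem_commutator (Subgroup.mem_top g')
                  (Subgroup.mem_top h')⟩) ∧
      (∀ φ : MulAut G, φ ∈ π.ker ↔
        ((∀ g : G, ((φ g : G) : G ⧸ Subgroup.center G) = ↑g) ∧
          (∀ c : G, c ∈ commutator G → φ c = c))) ∧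
      Nonempty (↥π.ker ≃* ((G ⧸ Subgroup.center G) →* ↥(Subgroup.center G))) ∧
      (∃ s : ↥π.range →* MulAut G, ∀ y : ↥π.range, π (s y) = ↑y) := by
  have hrange := range_autInducedPair hcz.le hp hexp
  obtain ⟨σ, hσ⟩ := exists_rightInverse_autInducedPair hcz.le hp hexp
  refine ⟨autInducedPair, autInducedPair_fst_apply_mk, coe_autInducedPair_snd_apply,
    fun x => ?_, fun φ => ?_,
    ⟨kerAutInducedPairEquiv⟩, σ.comp (MulEquiv.subgroupCongr hrange).toMonoidHom,
    fun y => hσ _⟩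
  · rw [hrange]
    exact mem_pseudoIsometries_iff_forall_lift hcz.le x
  · rw [mem_ker_autInducedPair_iff, hcz]
end

section
/- Let p be an odd prime and let n, d be integers satisfying 2d + 2 ≤ n ≤ 3d and such that no integer i with n − 2d ≤ i < d divides d. Let H = H_1(𝔽_{p^d}) and let N be a subgroup of Z(H) with [H : N] = p^n. If F is a finite field of characteristic p, m ≥ 1, and there exists a surjective group homomorphism from H_m(F) onto H/N, then m = 1 and |F| = p^d (so H_m(F) is isomorphic to H). -/
set_option linter.unusedSectionVars false

/-- The generalized Heisenberg group `H_m(K)`: underlying set `K^m × K^m × K` with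
multiplication `(u,v,s)·(u',v',s') = (u+u', v+v', s+s'+u·v')`. -/
structure Heisenberg (K : Type*) (m : ℕ) where
  x : Fin m → K
  y : Fin m → K
  z : K

namespace Heisenberg

variable {K : Type*} [Field K] {m : ℕ}

@[ext] lemma ext' {a b : Heisenberg K m} (hx : a.x = b.x) (hy : a.y = b.y) (hz : a.z = b.z) :
    a = b := by cases a; cases b; simp_all

instance : Mul (Heisenberg K m) :=
  ⟨fun a b => ⟨a.x + b.x, a.y + b.y, a.z + b.z + dotProduct a.x b.y⟩⟩

instance : One (Heisenberg K m) := ⟨⟨0, 0, 0⟩⟩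

instance : Inv (Heisenberg K m) :=
  ⟨fun a => ⟨-a.x, -a.y, -a.z + dotProduct a.x a.y⟩⟩

@[simp] lemma mul_x (a b : Heisenberg K m) : (a * b).x = a.x + b.x := rfl
@[simp] lemma mul_y (a b : Heisenberg K m) : (a * b).y = a.y + b.y := rfl
@[simp] lemma mul_z (a b : Heisenberg K m) :
    (a * b).z = a.z + b.z + dotProduct a.x b.y := rfl
@[simp] lemma one_x : (1 : Heisenberg K m).x = 0 := rfl
@[simp] lemma one_y : (1 : Heisenberg K m).y = 0 := rfl
@[simp] lemma one_z : (1 : Heisenberg K m).z = 0 := rfl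
@[simp] lemma inv_x (a : Heisenberg K m) : a⁻¹.x = -a.x := rfl
@[simp] lemma inv_y (a : Heisenberg K m) : a⁻¹.y = -a.y := rfl
@[simp] lemma inv_z (a : Heisenberg K m) : a⁻¹.z = -a.z + dotProduct a.x a.y := rfl

instance instGroup : Group (Heisenberg K m) where
  mul_assoc a b c := by
    ext <;> simp [add_dotProduct, dotProduct_add] <;> ring
  one_mul a := by ext <;> simp
  mul_one a := by ext <;> simp
  inv_mul_cancel a := by
    ext <;> simp [neg_dotProduct]

end Heisenberg

/-!
Write `G = H_m(F)`, `H = H_1(𝔽_{p^d})` and `Q = H/N`. In a Heisenberg group the commutators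
with any noncentral element exhaust the centre, so a surjection `φ` from a Heisenberg group onto
`Q` that does not kill the centre satisfies `φ⁻¹(Z(Q)) = Z`: thus `Z(Q)` is the image of the
centre and has the same index. Since `[H : N] = p^n > p^{2d} = [H : Z(H)]` this applies to
`H → Q`, so `[Q : Z(Q)] = p^{2d}`; in particular `Q` is not abelian, so it applies to `f` too.
With `|F| = p^e` this gives `p^{2em} = p^{2d}` and `p^{n-2d} = |Z(Q)| ≤ |F| = p^e`, hence
`e ∣ d` and `n - 2d ≤ e ≤ d`, which forces `e = d` and `m = 1`.
-/

open scoped commutatorElement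
open Subgroup

namespace Heisenberg

variable {K : Type*} [Field K] {m : ℕ}

lemma commutatorElement_eq (a b : Heisenberg K m) :
    ⁅a, b⁆ = ⟨0, 0, a.x ⬝ᵥ b.y - b.x ⬝ᵥ a.y⟩ := by
  ext <;> simp [commutatorElement_def, add_dotProduct, dotProduct_neg]
  ring

lemma mem_center_iff {a : Heisenberg K m} : a ∈ center (Heisenberg K m) ↔ a.x = 0 ∧ a.y = 0 := by
  rw [Subgroup.mem_center_iff]
  refine ⟨fun h => ⟨funext fun i => ?_, funext fun i => ?_⟩, fun ⟨hx, hy⟩ b => ?_⟩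
  · simpa using congrArg z (h ⟨0, Pi.single i 1, 0⟩)
  · simpa using (congrArg z (h ⟨Pi.single i 1, 0, 0⟩)).symm
  · ext <;> simp [hx, hy, add_comm]

lemma commutatorElement_mem_center (a b : Heisenberg K m) : ⁅a, b⁆ ∈ center (Heisenberg K m) := by
  simp [mem_center_iff, commutatorElement_eq]

lemma exists_commutatorElement_eq {a c : Heisenberg K m} (ha : a ∉ center (Heisenberg K m))
    (hc : c ∈ center (Heisenberg K m)) : ∃ b, ⁅a, b⁆ = c := by
  obtain ⟨hcx, hcy⟩ := mem_center_iff.mp hc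
  rw [mem_center_iff, not_and_or] at ha
  rcases ha with hx | hy
  · obtain ⟨j, hj⟩ := Function.ne_iff.mp hx
    refine ⟨⟨0, Pi.single j ((a.x j)⁻¹ * c.z), 0⟩, ?_⟩
    ext <;> simp [commutatorElement_eq, hcx, hcy, mul_inv_cancel_left₀ hj]
  · obtain ⟨j, hj⟩ := Function.ne_iff.mp hy
    refine ⟨⟨Pi.single j (-(c.z * (a.y j)⁻¹)), 0, 0⟩, ?_⟩
    ext <;> simp [commutatorElement_eq, hcx, hcy, inv_mul_cancel_right₀ hj]

def proj (K : Type*) [Field K] (m : ℕ) :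
    Heisenberg K m →* Multiplicative ((Fin m → K) × (Fin m → K)) where
  toFun a := Multiplicative.ofAdd (a.x, a.y)
  map_one' := rfl
  map_mul' _ _ := rfl

lemma ker_proj : (proj K m).ker = center (Heisenberg K m) := by
  ext a
  rw [mem_center_iff, MonoidHom.mem_ker]
  exact Prod.ext_iff

lemma index_center : (center (Heisenberg K m)).index = Nat.card K ^ (2 * m) := by
  have hsurj : Function.Surjective (proj K m) := fun t => ⟨⟨t.toAdd.1, t.toAdd.2, 0⟩, rfl⟩
  rw [← ker_proj, index_ker, MonoidHom.range_eq_top.mpr hsurj, card_top,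
    Nat.card_congr Multiplicative.toAdd, Nat.card_prod, Nat.card_fun, Nat.card_fin, two_mul,
    pow_add]

def centerEquiv : center (Heisenberg K m) ≃ K where
  toFun a := a.1.z
  invFun t := ⟨⟨0, 0, t⟩, mem_center_iff.mpr ⟨rfl, rfl⟩⟩
  left_inv a := by
    obtain ⟨hx, hy⟩ := mem_center_iff.mp a.2
    exact Subtype.ext (ext' hx.symm hy.symm rfl)
  right_inv _ := rfl

lemma card_center : Nat.card (center (Heisenberg K m)) = Nat.card K :=
  Nat.card_congr centerEquiv

section Surjective

variable {Q : Type*} [Group Q] {f : Heisenberg K m →* Q}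

lemma center_eq_top_of_center_le_ker (hf : Function.Surjective f)
    (h : center (Heisenberg K m) ≤ f.ker) : center Q = ⊤ := by
  refine eq_top_iff.mpr fun q₁ _ => Subgroup.mem_center_iff.mpr fun q₂ => ?_
  obtain ⟨⟨a, rfl⟩, ⟨b, rfl⟩⟩ := And.intro (hf q₁) (hf q₂)
  rw [← commutatorElement_eq_one_iff_mul_comm, ← map_commutatorElement]
  exact h (commutatorElement_mem_center b a)

theorem comap_center_eq (hf : Function.Surjective f) (hZ : ¬ center (Heisenberg K m) ≤ f.ker) :
    (center Q).comap f = center (Heisenberg K m) := by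
  refine le_antisymm (fun a ha => ?_) (fun a ha => ?_)
  · by_contra hna
    refine hZ fun c hc => ?_
    obtain ⟨b, rfl⟩ := exists_commutatorElement_eq hna hc
    rw [MonoidHom.mem_ker, map_commutatorElement, commutatorElement_eq_one_iff_commute]
    exact (Subgroup.mem_center_iff.mp ha (f b)).symm
  · rw [mem_comap, Subgroup.mem_center_iff]
    intro q
    obtain ⟨b, rfl⟩ := hf q
    rw [← map_mul, ← map_mul, Subgroup.mem_center_iff.mp ha b]

lemma index_center_of_surjective (hf : Function.Surjective f)
    (hZ : ¬ center (Heisenberg K m) ≤ f.ker) : (center Q).index = Nat.card K ^ (2 * m) := by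
  rw [← index_comap_of_surjective _ hf, comap_center_eq hf hZ, index_center]

lemma card_center_dvd_of_surjective (hf : Function.Surjective f)
    (hZ : ¬ center (Heisenberg K m) ≤ f.ker) : Nat.card (center Q) ∣ Nat.card K := by
  rw [← map_comap_eq_self_of_surjective hf (center Q), comap_center_eq hf hZ,
    ← card_center (K := K) (m := m)]
  exact card_map_dvd _ _

end Surjective

def mapRingEquiv {K' : Type*} [Field K'] (σ : K ≃+* K') : Heisenberg K m ≃* Heisenberg K' m where
  toFun a := ⟨σ ∘ a.x, σ ∘ a.y, σ a.z⟩
  invFun a := ⟨σ.symm ∘ a.x, σ.symm ∘ a.y, σ.symm a.z⟩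
  left_inv a := by ext <;> simp
  right_inv a := by ext <;> simp
  map_mul' a b := by ext <;> simp [dotProduct, map_sum]

lemma nonempty_mulEquiv_of_card_eq {K' : Type*} [Field K'] [Finite K] [Finite K']
    (h : Nat.card K = Nat.card K') : Nonempty (Heisenberg K m ≃* Heisenberg K' m) := by
  have := Fintype.ofFinite K
  have := Fintype.ofFinite K'
  rw [Nat.card_eq_fintype_card, Nat.card_eq_fintype_card] at h
  exact ⟨mapRingEquiv (FiniteField.ringEquivOfCardEq h)⟩

end Heisenberg

theorem heisenberg_quotient_indigenous_general
    (p n d : ℕ) [Fact p.Prime]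
    (h1 : 2 * d + 2 ≤ n) (h2 : n ≤ 3 * d)
    (h3 : ∀ i : ℕ, n - 2 * d ≤ i → i < d → ¬ i ∣ d)
    (N : Subgroup (Heisenberg (GaloisField p d) 1)) [N.Normal]
    (hNi : N.index = p ^ n)
    (F : Type) [Field F] [Fintype F] [CharP F p] (m : ℕ)
    (f : Heisenberg F m →* Heisenberg (GaloisField p d) 1 ⧸ N)
    (hf : Function.Surjective f) :
    m = 1 ∧ Fintype.card F = p ^ d ∧
      Nonempty (Heisenberg F m ≃* Heisenberg (GaloisField p d) 1) := by
  have hp : 1 < p := (Fact.out : p.Prime).one_lt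
  have hK : Nat.card (GaloisField p d) = p ^ d := GaloisField.card p d (by omega)
  obtain ⟨e, -, hFe⟩ := FiniteField.card F p
  have hF : Nat.card F = p ^ (e : ℕ) := by rw [Nat.card_eq_fintype_card, hFe]
  have hNZ : ¬ center (Heisenberg (GaloisField p d) 1) ≤ (QuotientGroup.mk' N).ker := fun h => by
    have := index_dvd_of_le (QuotientGroup.ker_mk' N ▸ h)
    rw [hNi, Heisenberg.index_center, hK, ← pow_mul, Nat.pow_dvd_pow_iff_le_right hp] at this
    omega
  have hQ := Heisenberg.index_center_of_surjective (QuotientGroup.mk'_surjective N) hNZ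
  rw [hK, ← pow_mul, mul_comm] at hQ
  have hfZ : ¬ center (Heisenberg F m) ≤ f.ker := fun h => by
    rw [Heisenberg.center_eq_top_of_center_le_ker hf h, index_top] at hQ
    exact (Nat.one_lt_pow (by omega) hp).ne hQ
  have hem : e * m = d := by
    have := Heisenberg.index_center_of_surjective hf hfZ
    rw [hQ, hF, ← pow_mul] at this
    linarith [Nat.pow_right_injective (Fact.out : p.Prime).two_le this]
  have hne : n ≤ e + 2 * d := by
    have hcard := card_mul_index (center (Heisenberg (GaloisField p d) 1 ⧸ N))
    rw [hQ, ← index, hNi] at hcard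
    rw [← Nat.pow_dvd_pow_iff_le_right hp, pow_add, ← hF, ← hcard]
    exact mul_dvd_mul_right (Heisenberg.card_center_dvd_of_surjective hf hfZ) _
  have hed : (e : ℕ) = d := by
    by_contra hne'
    exact h3 e (by omega) (lt_of_le_of_ne (Nat.le_of_dvd (by omega) ⟨m, hem.symm⟩) hne')
      ⟨m, hem.symm⟩
  obtain rfl : m = 1 := by nlinarith
  refine ⟨rfl, hed ▸ hFe, Heisenberg.nonempty_mulEquiv_of_card_eq ?_⟩
  rw [hF, hK, hed]

/-- Let `p` be an odd prime and `n, d` integers with `2d+2 ≤ n ≤ 3d` such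
that no integer `i` with `n-2d ≤ i < d` divides `d`.  Let `H = H_1(𝔽_{p^d})` and let `N` be
a subgroup of `Z(H)` of index `p^n` in `H`.  If `F` is a finite field of characteristic `p`,
`m ≥ 1`, and `H_m(F)` surjects onto `H/N`, then `m = 1` and `|F| = p^d`
(so `H_m(F) ≅ H`). -/
theorem heisenberg_quotient_indigenous
    (p n d : ℕ) [Fact p.Prime] (hp : Odd p)
    (h1 : 2 * d + 2 ≤ n) (h2 : n ≤ 3 * d)
    (h3 : ∀ i : ℕ, n - 2 * d ≤ i → i < d → ¬ i ∣ d)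
    (N : Subgroup (Heisenberg (GaloisField p d) 1)) [N.Normal]
    (hNc : N ≤ Subgroup.center (Heisenberg (GaloisField p d) 1))
    (hNi : N.index = p ^ n)
    (F : Type) [Field F] [Fintype F] [CharP F p] (m : ℕ) (hm : 1 ≤ m)
    (f : Heisenberg F m →* Heisenberg (GaloisField p d) 1 ⧸ N)
    (hf : Function.Surjective f) :
    m = 1 ∧ Fintype.card F = p ^ d ∧
      Nonempty (Heisenberg F m ≃* Heisenberg (GaloisField p d) 1) :=
  heisenberg_quotient_indigenous_general p n d h1 h2 h3 N hNi F m f hf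
end
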